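/- Let c be bounded and strictly positive, and let β⁺, β⁻ ∈ ℝ^d with ‖β⁺‖₀ < ‖β⁻‖₀. Define L_γ(β) as the infimum over all coordinate paths 𝛃 from 0 ending at β of Σ_{k=1}^{|𝛃|} γ^k c(β_k). Then L_γ(β⁻) − L_γ(β⁺) → +∞ as γ → ∞. -/

import Mathlib

open Finset Filter

/-!
Switching on the nonzero coordinates of `β` one at a time gives a path of length `‖β‖₀`, so
`L_γ(β⁺) ≤ ‖β⁺‖₀ · c_max · γ ^ ‖β⁺‖₀`. Conversely, each step of a path changes at most one
coordinate, so every path to `β⁻` has length `K ≥ ‖β⁻‖₀`, and its last term alone gives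
`L_γ(β⁻) ≥ γ ^ ‖β⁻‖₀ · c(β⁻)`. The lower bound grows like a strictly higher power of `γ`.
-/

/-- Number of coordinates in which two vectors differ (the ℓ₀ "norm" of their difference). -/
noncomputable def diffCount {d : ℕ} (x y : Fin d → ℝ) : ℕ :=
  (Finset.univ.filter (fun i => x i ≠ y i)).card

/-- A coordinate path of length `K`: starts at `0`, each step changes at most one coordinate. -/
def IsPath {d : ℕ} (K : ℕ) (p : ℕ → Fin d → ℝ) : Prop :=
  p 0 = 0 ∧ ∀ k, 1 ≤ k → k ≤ K → diffCount (p (k - 1)) (p k) ≤ 1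

/-- Number of nonzero coordinates of a vector (‖β‖₀). -/
noncomputable def sparsity {d : ℕ} (β : Fin d → ℝ) : ℕ :=
  (Finset.univ.filter (fun i => β i ≠ 0)).card

/-- The cost sequence of a path of length `K`. -/
def costSeq {d : ℕ} (c : (Fin d → ℝ) → ℝ) (K : ℕ) (p : ℕ → Fin d → ℝ) : ℕ → ℝ :=
  fun k => if 1 ≤ k ∧ k ≤ K then c (p k) else 0

/-- Geometric-weighted interpretability loss of a path of length `K`. -/
noncomputable def pathLoss {d : ℕ} (c : (Fin d → ℝ) → ℝ) (γ : ℝ) (K : ℕ)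
    (p : ℕ → Fin d → ℝ) : ℝ :=
  ∑ k ∈ Finset.Icc 1 K, γ ^ k * c (p k)

/-- Model interpretability: infimum of the path loss over all explanations of `β`. -/
noncomputable def modelLoss {d : ℕ} (c : (Fin d → ℝ) → ℝ) (γ : ℝ) (β : Fin d → ℝ) : ℝ :=
  sInf {v : ℝ | ∃ K p, IsPath K p ∧ p K = β ∧ v = pathLoss c γ K p}

lemma diffCount_self {d : ℕ} (x : Fin d → ℝ) : diffCount x x = 0 := by
  simp [diffCount]

lemma diffCount_triangle {d : ℕ} (x y z : Fin d → ℝ) :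
    diffCount x z ≤ diffCount x y + diffCount y z := by
  have hsub : univ.filter (fun i => x i ≠ z i) ⊆
      univ.filter (fun i => x i ≠ y i) ∪ univ.filter (fun i => y i ≠ z i) := by
    intro i
    simp only [mem_filter, mem_union, mem_univ, true_and]
    contrapose!
    exact fun h => h.1.trans h.2
  exact (card_le_card hsub).trans (card_union_le _ _)

lemma diffCount_update_le {d : ℕ} (x : Fin d → ℝ) (j : Fin d) (v : ℝ) :
    diffCount x (Function.update x j v) ≤ 1 := by
  have hsub : univ.filter (fun i => x i ≠ Function.update x j v i) ⊆ {j} := by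
    intro i
    simp only [mem_filter, mem_univ, true_and, mem_singleton]
    contrapose!
    intro hij
    rw [Function.update_of_ne hij]
  exact (card_le_card hsub).trans (card_singleton j).le

lemma diffCount_zero_left {d : ℕ} (β : Fin d → ℝ) : diffCount 0 β = sparsity β := by
  simp only [diffCount, sparsity, Pi.zero_apply, ne_comm]

lemma IsPath.update_succ {d K : ℕ} {p : ℕ → Fin d → ℝ} (hp : IsPath K p) {y : Fin d → ℝ}
    (hy : diffCount (p K) y ≤ 1) : IsPath (K + 1) (Function.update p (K + 1) y) := by
  refine ⟨by rw [Function.update_of_ne (by omega), hp.1], fun k hk1 hk => ?_⟩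
  rw [Function.update_of_ne (by omega)]
  rcases Nat.lt_or_eq_of_le hk with hk | rfl
  · rw [Function.update_of_ne (by omega)]
    exact hp.2 k hk1 (by omega)
  · simpa using hy

lemma IsPath.diffCount_le {d K : ℕ} {p : ℕ → Fin d → ℝ} (hp : IsPath K p) :
    ∀ k ≤ K, diffCount (p 0) (p k) ≤ k
  | 0, _ => by simp [diffCount_self]
  | k + 1, hk =>
    calc diffCount (p 0) (p (k + 1))
        ≤ diffCount (p 0) (p k) + diffCount (p k) (p (k + 1)) := diffCount_triangle _ _ _
      _ ≤ k + 1 := Nat.add_le_add (hp.diffCount_le k (by omega)) (hp.2 (k + 1) (by omega) hk)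

lemma IsPath.sparsity_le {d K : ℕ} {p : ℕ → Fin d → ℝ} (hp : IsPath K p) :
    sparsity (p K) ≤ K := by
  simpa [hp.1, diffCount_zero_left] using hp.diffCount_le K le_rfl

lemma exists_isPath_piecewise {d : ℕ} (β : Fin d → ℝ) (S : Finset (Fin d)) :
    ∃ p, IsPath S.card p ∧ p S.card = S.piecewise β 0 := by
  induction S using Finset.induction_on with
  | empty => exact ⟨fun _ => 0, ⟨rfl, fun _ _ _ => by simp [diffCount_self]⟩, by simp⟩
  | insert j S hj ih =>
    obtain ⟨p, hp, hpS⟩ := ih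
    refine ⟨Function.update p (S.card + 1) ((insert j S).piecewise β 0), ?_, ?_⟩
    · rw [card_insert_of_notMem hj]
      refine hp.update_succ ?_
      rw [hpS, piecewise_insert]
      exact diffCount_update_le _ _ _
    · rw [card_insert_of_notMem hj, Function.update_self]

lemma exists_isPath_sparsity {d : ℕ} (β : Fin d → ℝ) :
    ∃ p, IsPath (sparsity β) p ∧ p (sparsity β) = β := by
  obtain ⟨p, hp, hpβ⟩ := exists_isPath_piecewise β (univ.filter fun i => β i ≠ 0)
  refine ⟨p, hp, hpβ.trans ?_⟩
  ext i
  by_cases hi : β i = 0 <;> simp [Finset.piecewise, hi]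

section Loss

variable {d : ℕ} {c : (Fin d → ℝ) → ℝ} {γ : ℝ}

lemma pathLoss_nonneg (hc : ∀ x, 0 ≤ c x) (hγ : 0 ≤ γ) (K : ℕ) (p : ℕ → Fin d → ℝ) :
    0 ≤ pathLoss c γ K p :=
  sum_nonneg fun k _ => mul_nonneg (pow_nonneg hγ k) (hc _)

lemma pathLoss_le {cmax : ℝ} (hc : ∀ x, 0 ≤ c x ∧ c x ≤ cmax) (hγ : 1 ≤ γ) (K : ℕ)
    (p : ℕ → Fin d → ℝ) : pathLoss c γ K p ≤ K * cmax * γ ^ K := by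
  calc pathLoss c γ K p ≤ ∑ _k ∈ Icc 1 K, cmax * γ ^ K := by
        refine sum_le_sum fun k hk => ?_
        rw [mul_comm cmax]
        exact mul_le_mul (pow_le_pow_right₀ hγ (mem_Icc.mp hk).2) (hc _).2 (hc _).1
          (by positivity)
    _ = K * cmax * γ ^ K := by simp [mul_assoc]

lemma pow_mul_le_pathLoss (hc : ∀ x, 0 ≤ c x) (hγ : 0 ≤ γ) {K : ℕ} (hK : 1 ≤ K)
    (p : ℕ → Fin d → ℝ) : γ ^ K * c (p K) ≤ pathLoss c γ K p :=
  single_le_sum (f := fun k => γ ^ k * c (p k)) (fun k _ => mul_nonneg (pow_nonneg hγ k) (hc _))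
    (mem_Icc.mpr ⟨hK, le_rfl⟩)

lemma modelLoss_le_pathLoss (hc : ∀ x, 0 ≤ c x) (hγ : 0 ≤ γ) {K : ℕ} {p : ℕ → Fin d → ℝ}
    (hp : IsPath K p) : modelLoss c γ (p K) ≤ pathLoss c γ K p := by
  refine csInf_le ⟨0, ?_⟩ ⟨K, p, hp, rfl, rfl⟩
  rintro v ⟨K', p', -, -, rfl⟩
  exact pathLoss_nonneg hc hγ K' p'

lemma modelLoss_le {cmax : ℝ} (hc : ∀ x, 0 ≤ c x ∧ c x ≤ cmax) (hγ : 1 ≤ γ)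
    (β : Fin d → ℝ) : modelLoss c γ β ≤ sparsity β * cmax * γ ^ sparsity β := by
  obtain ⟨p, hp, hpβ⟩ := exists_isPath_sparsity β
  calc modelLoss c γ β = modelLoss c γ (p (sparsity β)) := by rw [hpβ]
    _ ≤ pathLoss c γ (sparsity β) p :=
      modelLoss_le_pathLoss (fun x => (hc x).1) (zero_le_one.trans hγ) hp
    _ ≤ _ := pathLoss_le hc hγ _ p

lemma pow_sparsity_mul_le_modelLoss (hc : ∀ x, 0 ≤ c x) (hγ : 1 ≤ γ) {β : Fin d → ℝ}
    (hβ : 0 < sparsity β) : γ ^ sparsity β * c β ≤ modelLoss c γ β := by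
  obtain ⟨q, hq, hqβ⟩ := exists_isPath_sparsity β
  refine le_csInf ⟨_, _, q, hq, hqβ, rfl⟩ ?_
  rintro v ⟨K, p, hp, rfl, rfl⟩
  have hK : sparsity (p K) ≤ K := hp.sparsity_le
  calc γ ^ sparsity (p K) * c (p K) ≤ γ ^ K * c (p K) :=
        mul_le_mul_of_nonneg_right (pow_le_pow_right₀ hγ hK) (hc _)
    _ ≤ pathLoss c γ K p := pow_mul_le_pathLoss hc (zero_le_one.trans hγ) (by omega) p

end Loss

lemma tendsto_mul_pow_sub_mul_pow_atTop {a : ℝ} (ha : 0 < a) (b : ℝ) {m s : ℕ} (h : s < m) :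
    Tendsto (fun x : ℝ => a * x ^ m - b * x ^ s) atTop atTop := by
  have hlead : Tendsto (fun x : ℝ => a * x ^ (m - s) - b) atTop atTop :=
    tendsto_atTop_add_const_right _ _ <|
      (tendsto_pow_atTop (by omega)).const_mul_atTop ha
  refine tendsto_atTop_mono' _ ?_ hlead
  filter_upwards [eventually_ge_atTop 1, hlead.eventually_ge_atTop 0] with x hx hnonneg
  calc a * x ^ (m - s) - b ≤ x ^ s * (a * x ^ (m - s) - b) :=
        le_mul_of_one_le_left hnonneg (one_le_pow₀ hx)
    _ = a * x ^ m - b * x ^ s := by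
      rw [mul_sub, ← mul_assoc, mul_comm (x ^ s) a, mul_assoc, ← pow_add,
        Nat.add_sub_cancel' h.le, mul_comm (x ^ s) b]

/-- If ‖β⁺‖₀ < ‖β⁻‖₀ then the model-interpretability gap L_γ(β⁻) − L_γ(β⁺) → ∞
as γ → ∞, for bounded strictly positive costs. -/
theorem stmt6 {d : ℕ} (c : (Fin d → ℝ) → ℝ) (cmax : ℝ)
    (hc : ∀ x, 0 < c x ∧ c x ≤ cmax)
    (βp βm : Fin d → ℝ) (h : sparsity βp < sparsity βm) :
    Filter.Tendsto (fun γ : ℝ => modelLoss c γ βm - modelLoss c γ βp)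
      Filter.atTop Filter.atTop := by
  have hc' : ∀ x, 0 ≤ c x ∧ c x ≤ cmax := fun x => ⟨(hc x).1.le, (hc x).2⟩
  refine tendsto_atTop_mono' _ ?_
    (tendsto_mul_pow_sub_mul_pow_atTop (hc βm).1 (sparsity βp * cmax) h)
  filter_upwards [eventually_ge_atTop 1] with γ hγ
  have hlower := pow_sparsity_mul_le_modelLoss (fun x => (hc' x).1) hγ (pos_of_gt h)
  have hupper := modelLoss_le hc' hγ βp
  linarith
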